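/- Let u, v, z : ℝ² → ℝ be smooth with u_t = v - u·u_x, v_t = z - u·v_x, z_t = -u·z_x, D_t = ∂/∂t + u·∂/∂x, and z ≠ 0 everywhere. Then r₁ := v_x·v³/(6z³) - u_x·v²/(2z²) + u·(u·z - v²)·z_x/(6z³) + v/z satisfies D_t r₁ + r₁·u_x = 1. -/

import Mathlib

noncomputable def pt (f : ℝ × ℝ → ℝ) : ℝ × ℝ → ℝ := fun p => fderiv ℝ f p (1, 0)
noncomputable def px (f : ℝ × ℝ → ℝ) : ℝ × ℝ → ℝ := fun p => fderiv ℝ f p (0, 1)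
noncomputable def Dt (u f : ℝ × ℝ → ℝ) : ℝ × ℝ → ℝ := fun p => pt f p + u p * px f p

section fd
variable {f g : ℝ × ℝ → ℝ} {p w : ℝ × ℝ} {c : ℝ}

lemma fd_add (hf : DifferentiableAt ℝ f p) (hg : DifferentiableAt ℝ g p) :
    fderiv ℝ (fun q => f q + g q) p w = fderiv ℝ f p w + fderiv ℝ g p w := by
  rw [fderiv_fun_add hf hg]; simp

lemma fd_sub (hf : DifferentiableAt ℝ f p) (hg : DifferentiableAt ℝ g p) :
    fderiv ℝ (fun q => f q - g q) p w = fderiv ℝ f p w - fderiv ℝ g p w := by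
  rw [fderiv_fun_sub hf hg]; simp

lemma fd_mul (hf : DifferentiableAt ℝ f p) (hg : DifferentiableAt ℝ g p) :
    fderiv ℝ (fun q => f q * g q) p w = fderiv ℝ f p w * g p + f p * fderiv ℝ g p w := by
  rw [fderiv_fun_mul hf hg]; simp; ring

lemma fd_inv (hg : DifferentiableAt ℝ g p) (h0 : g p ≠ 0) :
    fderiv ℝ (fun q => (g q)⁻¹) p w = -(fderiv ℝ g p w) / g p ^ 2 := by
  have h := ((hasFDerivAt_inv h0).comp p hg.hasFDerivAt).fderiv
  rw [show (fun q => (g q)⁻¹) = Inv.inv ∘ g from rfl, h]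
  simp [ContinuousLinearMap.smulRight_apply]
  ring

lemma fd_div (hf : DifferentiableAt ℝ f p) (hg : DifferentiableAt ℝ g p) (h0 : g p ≠ 0) :
    fderiv ℝ (fun q => f q / g q) p w
      = (fderiv ℝ f p w * g p - f p * fderiv ℝ g p w) / g p ^ 2 := by
  have : (fun q => f q / g q) = fun q => f q * (g q)⁻¹ := by
    funext q; rw [div_eq_mul_inv]
  rw [this, fd_mul (g := fun q => (g q)⁻¹) hf (hg.inv h0), fd_inv hg h0]
  field_simp
  ring

lemma fd_sq (hf : DifferentiableAt ℝ f p) :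
    fderiv ℝ (fun q => f q ^ 2) p w = 2 * f p * fderiv ℝ f p w := by
  have : (fun q => f q ^ 2) = fun q => f q * f q := by funext q; ring
  rw [this, fd_mul hf hf]; ring

lemma fd_cube (hf : DifferentiableAt ℝ f p) :
    fderiv ℝ (fun q => f q ^ 3) p w = 3 * f p ^ 2 * fderiv ℝ f p w := by
  have : (fun q => f q ^ 3) = fun q => f q * f q * f q := by funext q; ring
  rw [this, fd_mul (f := fun q => f q * f q) (hf.mul hf) hf, fd_mul hf hf]; ring

lemma fd_const_mul (hf : DifferentiableAt ℝ f p) :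
    fderiv ℝ (fun q => c * f q) p w = c * fderiv ℝ f p w := by
  rw [fderiv_const_mul hf]; simp

end fd

section clairaut
variable {f : ℝ × ℝ → ℝ} {p w : ℝ × ℝ}

lemma contDiff_px (hf : ContDiff ℝ (⊤ : ℕ∞) f) : ContDiff ℝ (⊤ : ℕ∞) (px f) :=
  (hf.fderiv_right (by simp)).clm_apply contDiff_const

lemma contDiff_pt (hf : ContDiff ℝ (⊤ : ℕ∞) f) : ContDiff ℝ (⊤ : ℕ∞) (pt f) :=
  (hf.fderiv_right (by simp)).clm_apply contDiff_const

lemma fd_px (hf : ContDiff ℝ (⊤ : ℕ∞) f) :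
    fderiv ℝ (px f) p w = fderiv ℝ (fderiv ℝ f) p w (0, 1) := by
  have hdf : DifferentiableAt ℝ (fderiv ℝ f) p :=
    ((hf.fderiv_right (m := (⊤ : ℕ∞)) (by simp)).differentiable (by simp)) p
  rw [show px f = fun q => (fderiv ℝ f q) ((fun _ => ((0:ℝ),(1:ℝ))) q) from rfl,
    fderiv_clm_apply hdf (differentiableAt_const _)]
  simp

lemma fd_pt (hf : ContDiff ℝ (⊤ : ℕ∞) f) :
    fderiv ℝ (pt f) p w = fderiv ℝ (fderiv ℝ f) p w (1, 0) := by
  have hdf : DifferentiableAt ℝ (fderiv ℝ f) p :=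
    ((hf.fderiv_right (m := (⊤ : ℕ∞)) (by simp)).differentiable (by simp)) p
  rw [show pt f = fun q => (fderiv ℝ f q) ((fun _ => ((1:ℝ),(0:ℝ))) q) from rfl,
    fderiv_clm_apply hdf (differentiableAt_const _)]
  simp

lemma pt_px_comm (hf : ContDiff ℝ (⊤ : ℕ∞) f) : pt (px f) p = px (pt f) p := by
  have hdf : ∀ y, HasFDerivAt f (fderiv ℝ f y) y := fun y =>
    ((hf.differentiable (by simp)) y).hasFDerivAt
  have h2 : HasFDerivAt (fderiv ℝ f) (fderiv ℝ (fderiv ℝ f) p) p :=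
    (((hf.fderiv_right (m := (⊤ : ℕ∞)) (by simp)).differentiable (by simp)) p).hasFDerivAt
  have hs := second_derivative_symmetric hdf h2 (1, 0) (0, 1)
  show fderiv ℝ (px f) p (1,0) = fderiv ℝ (pt f) p (0,1)
  rw [fd_px hf, fd_pt hf, hs]

end clairaut

lemma diffAt_div {f g : ℝ × ℝ → ℝ} {p : ℝ × ℝ} (hf : DifferentiableAt ℝ f p)
    (hg : DifferentiableAt ℝ g p) (h0 : g p ≠ 0) :
    DifferentiableAt ℝ (fun q => f q / g q) p := by
  have h : (fun q => f q / g q) = fun q => f q * (g q)⁻¹ :=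
    funext fun q => div_eq_mul_inv _ _
  rw [h]; exact hf.mul (hg.inv h0)

lemma Dt_eq (u f : ℝ × ℝ → ℝ) (p : ℝ × ℝ) :
    Dt u f p = fderiv ℝ f p (1, 0) + u p * fderiv ℝ f p (0, 1) := rfl

lemma fd_neg {f : ℝ × ℝ → ℝ} {p w : ℝ × ℝ} :
    fderiv ℝ (fun q => -(f q)) p w = -(fderiv ℝ f p w) := by
  rw [fderiv_fun_neg]; simp

theorem riemann_N3_r1 (u v z : ℝ × ℝ → ℝ)
    (hu : ContDiff ℝ (⊤ : ℕ∞) u) (hv : ContDiff ℝ (⊤ : ℕ∞) v) (hz : ContDiff ℝ (⊤ : ℕ∞) z)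
    (hz0 : ∀ p, z p ≠ 0)
    (h1 : ∀ p, pt u p = v p - u p * px u p)
    (h2 : ∀ p, pt v p = z p - u p * px v p)
    (h3 : ∀ p, pt z p = -(u p * px z p)) :
    ∀ p, Dt u (fun q => px v q * v q ^ 3 / (6 * z q ^ 3) - px u q * v q ^ 2 / (2 * z q ^ 2)
            + u q * (u q * z q - v q ^ 2) * px z q / (6 * z q ^ 3) + v q / z q) p
        + (px v p * v p ^ 3 / (6 * z p ^ 3) - px u p * v p ^ 2 / (2 * z p ^ 2)
            + u p * (u p * z p - v p ^ 2) * px z p / (6 * z p ^ 3) + v p / z p) * px u p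
      = 1 := by
  intro p
  have hud : Differentiable ℝ u := hu.differentiable (by simp)
  have hvd : Differentiable ℝ v := hv.differentiable (by simp)
  have hzd : Differentiable ℝ z := hz.differentiable (by simp)
  have hpud : Differentiable ℝ (px u) := (contDiff_px hu).differentiable (by simp)
  have hpvd : Differentiable ℝ (px v) := (contDiff_px hv).differentiable (by simp)
  have hpzd : Differentiable ℝ (px z) := (contDiff_px hz).differentiable (by simp)
  have hz3 : (6 : ℝ) * z p ^ 3 ≠ 0 := by
    have := hz0 p; positivity
  have hz2 : (2 : ℝ) * z p ^ 2 ≠ 0 := by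
    have := hz0 p; positivity
  have dA1 : DifferentiableAt ℝ (fun q => px v q * v q ^ 3) p :=
    (hpvd p).mul ((hvd p).pow 3)
  have dA2 : DifferentiableAt ℝ (fun q => 6 * z q ^ 3) p :=
    ((hzd p).pow 3).const_mul 6
  have dB1 : DifferentiableAt ℝ (fun q => px u q * v q ^ 2) p :=
    (hpud p).mul ((hvd p).pow 2)
  have dB2 : DifferentiableAt ℝ (fun q => 2 * z q ^ 2) p :=
    ((hzd p).pow 2).const_mul 2
  have dC0 : DifferentiableAt ℝ (fun q => u q * z q - v q ^ 2) p :=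
    ((hud p).mul (hzd p)).sub ((hvd p).pow 2)
  have dC1 : DifferentiableAt ℝ (fun q => u q * (u q * z q - v q ^ 2) * px z q) p :=
    ((hud p).mul dC0).mul (hpzd p)
  have dA : DifferentiableAt ℝ (fun q => px v q * v q ^ 3 / (6 * z q ^ 3)) p :=
    diffAt_div dA1 dA2 hz3
  have dB : DifferentiableAt ℝ (fun q => px u q * v q ^ 2 / (2 * z q ^ 2)) p :=
    diffAt_div dB1 dB2 hz2
  have dC : DifferentiableAt ℝ (fun q => u q * (u q * z q - v q ^ 2) * px z q / (6 * z q ^ 3)) p :=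
    diffAt_div dC1 dA2 hz3
  have dD : DifferentiableAt ℝ (fun q => v q / z q) p :=
    diffAt_div (hvd p) (hzd p) (hz0 p)
  have key : ∀ w : ℝ × ℝ,
      fderiv ℝ (fun q => px v q * v q ^ 3 / (6 * z q ^ 3) - px u q * v q ^ 2 / (2 * z q ^ 2)
          + u q * (u q * z q - v q ^ 2) * px z q / (6 * z q ^ 3) + v q / z q) p w
      = ((fderiv ℝ (px v) p w * v p ^ 3 + px v p * (3 * v p ^ 2 * fderiv ℝ v p w)) * (6 * z p ^ 3)
          - px v p * v p ^ 3 * (6 * (3 * z p ^ 2 * fderiv ℝ z p w))) / (6 * z p ^ 3) ^ 2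
        - ((fderiv ℝ (px u) p w * v p ^ 2 + px u p * (2 * v p * fderiv ℝ v p w)) * (2 * z p ^ 2)
          - px u p * v p ^ 2 * (2 * (2 * z p * fderiv ℝ z p w))) / (2 * z p ^ 2) ^ 2
        + (((fderiv ℝ u p w * (u p * z p - v p ^ 2)
              + u p * ((fderiv ℝ u p w * z p + u p * fderiv ℝ z p w)
                  - 2 * v p * fderiv ℝ v p w)) * px z p
            + u p * (u p * z p - v p ^ 2) * fderiv ℝ (px z) p w) * (6 * z p ^ 3)
          - u p * (u p * z p - v p ^ 2) * px z p * (6 * (3 * z p ^ 2 * fderiv ℝ z p w)))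
            / (6 * z p ^ 3) ^ 2
        + (fderiv ℝ v p w * z p - v p * fderiv ℝ z p w) / z p ^ 2 := by
    intro w
    rw [fd_add ((dA.fun_sub dB).fun_add dC) dD, fd_add (dA.fun_sub dB) dC, fd_sub dA dB,
      fd_div dA1 dA2 hz3, fd_div dB1 dB2 hz2, fd_div dC1 dA2 hz3, fd_div (hvd p) (hzd p) (hz0 p),
      fd_mul (hpvd p) ((hvd p).fun_pow 3), fd_cube (hvd p),
      fd_mul (hpud p) ((hvd p).fun_pow 2), fd_sq (hvd p),
      fd_mul ((hud p).fun_mul dC0) (hpzd p), fd_mul (hud p) dC0,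
      fd_sub ((hud p).fun_mul (hzd p)) ((hvd p).fun_pow 2), fd_mul (hud p) (hzd p), fd_sq (hvd p),
      fd_const_mul ((hzd p).fun_pow 3), fd_cube (hzd p),
      fd_const_mul ((hzd p).fun_pow 2), fd_sq (hzd p)]
  -- second order commutation facts
  have e1 : fderiv ℝ (px u) p (1, 0)
      = fderiv ℝ v p (0, 1) - (fderiv ℝ u p (0, 1) * fderiv ℝ u p (0, 1)
          + u p * fderiv ℝ (px u) p (0, 1)) := by
    have hc : pt (px u) p = px (pt u) p := pt_px_comm hu
    have hpt : pt u = fun q => v q - u q * px u q := funext h1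
    have : fderiv ℝ (pt u) p (0, 1)
        = fderiv ℝ v p (0, 1) - (fderiv ℝ u p (0, 1) * px u p + u p * fderiv ℝ (px u) p (0, 1)) := by
      rw [hpt, fd_sub (hvd p) ((hud p).fun_mul (hpud p)), fd_mul (hud p) (hpud p)]
    simpa [pt, px] using hc.trans this
  have e2 : fderiv ℝ (px v) p (1, 0)
      = fderiv ℝ z p (0, 1) - (fderiv ℝ u p (0, 1) * fderiv ℝ v p (0, 1)
          + u p * fderiv ℝ (px v) p (0, 1)) := by
    have hc : pt (px v) p = px (pt v) p := pt_px_comm hv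
    have hpt : pt v = fun q => z q - u q * px v q := funext h2
    have : fderiv ℝ (pt v) p (0, 1)
        = fderiv ℝ z p (0, 1) - (fderiv ℝ u p (0, 1) * px v p + u p * fderiv ℝ (px v) p (0, 1)) := by
      rw [hpt, fd_sub (hzd p) ((hud p).fun_mul (hpvd p)), fd_mul (hud p) (hpvd p)]
    simpa [pt, px] using hc.trans this
  have e3 : fderiv ℝ (px z) p (1, 0)
      = -(fderiv ℝ u p (0, 1) * fderiv ℝ z p (0, 1) + u p * fderiv ℝ (px z) p (0, 1)) := by
    have hc : pt (px z) p = px (pt z) p := pt_px_comm hz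
    have hpt : pt z = fun q => -(u q * px z q) := funext h3
    have : fderiv ℝ (pt z) p (0, 1)
        = -(fderiv ℝ u p (0, 1) * px z p + u p * fderiv ℝ (px z) p (0, 1)) := by
      rw [hpt, fd_neg, fd_mul (hud p) (hpzd p)]
    simpa [pt, px] using hc.trans this
  have h1' : fderiv ℝ u p (1, 0) = v p - u p * fderiv ℝ u p (0, 1) := h1 p
  have h2' : fderiv ℝ v p (1, 0) = z p - u p * fderiv ℝ v p (0, 1) := h2 p
  have h3' : fderiv ℝ z p (1, 0) = -(u p * fderiv ℝ z p (0, 1)) := h3 p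
  have r1 : fderiv ℝ u p (0, 1) = px u p := rfl
  have r2 : fderiv ℝ v p (0, 1) = px v p := rfl
  have r3 : fderiv ℝ z p (0, 1) = px z p := rfl
  rw [Dt_eq, key (1, 0), key (0, 1), e1, e2, e3, h1', h2', h3', r1, r2, r3]
  have hzp := hz0 p
  field_simp
  ring
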